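/- Fix u ∈ (0,1) and N ≥ 2. Parameterize the PU on–off process by the arrival rate λ_n > 0 via λ_f = u·λ_n/(1−u), with u held fixed, and define the Fisher information I_m(λ_n,N) of the uniformly sampled traffic vector with respect to λ_n (inter-sample time T_c > 0). Then I_m(λ_n,N) = (u²/(1−u)²)·I_m(λ_f,N), where I_m(λ_f,N) = (Γ T_c)²(1−u)(1+Γ)(N−1)/(u(1−Γ)[Γ+u(1−Γ)²(1−u)]) with Γ = e^{−λ_f T_c/u} evaluated at λ_f = uλ_n/(1−u). Consequently, over a fixed observation window T with T_c = T/(N−1), lim_{N→∞} I_m(λ_n,N)^{−1} = λ_n/(2T·u). -/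

import Mathlib

/-!
The likelihood of the sampled on–off chain is a product of transition probabilities, so the
score is a sum of per-transition increments, each with conditional mean zero given the past
(the transition probabilities out of a state sum to one for every rate). In the second moment
the cross terms therefore vanish, and since the chain starts in its stationary law every
transition contributes the same stationary per-transition Fisher information; evaluating that
one term gives the closed form `fisherLf`. Passing from `λ_f` to `λ_n = (1 - u) λ_f / u`
multiplies the score by `u / (1 - u)`. For the window limit, with `T_c = T / (N - 1)` one has
`Γ → 1` and `(N - 1)(1 - Γ) → λ_f T / u`.
-/

open Finset Filter

/-- Transition probabilities of the PU on-off process: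
`transProb u lf t x y = Pr_{xy}(t)` where `false` = idle, `true` = active. -/
noncomputable def transProb (u lf t : ℝ) : Bool → Bool → ℝ
  | false, false => 1 - u + u * Real.exp (-(lf * t) / u)
  | false, true  => 1 - (1 - u + u * Real.exp (-(lf * t) / u))
  | true,  true  => u + (1 - u) * Real.exp (-(lf * t) / u)
  | true,  false => 1 - (u + (1 - u) * Real.exp (-(lf * t) / u))

/-- Likelihood of a binary sample sequence `z` of length `n + 1`
with inter-sample times `T 1, …, T n`. -/
noncomputable def seqProb (u lf : ℝ) {n : ℕ} (T : ℕ → ℝ) (z : Fin (n + 1) → Bool) : ℝ :=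
  (if z 0 then u else 1 - u) *
    ∏ k : Fin n, transProb u lf (T (k.val + 1)) (z k.castSucc) (z k.succ)

/-- Closed form of the Fisher information `I_m(λ_f, N)` under uniform sampling
with inter-sample time `Tc` and `N - 1 = m` transitions, evaluated at
departure rate `lf`: `(Γ Tc)²(1-u)(1+Γ)(N-1)/(u(1-Γ)[Γ+u(1-Γ)²(1-u)])`
with `Γ = e^{-λ_f T_c/u}`. -/
noncomputable def fisherLf (u lf Tc : ℝ) (m : ℝ) : ℝ :=
  (Real.exp (-(lf * Tc) / u) * Tc) ^ 2 * (1 - u) *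
      (1 + Real.exp (-(lf * Tc) / u)) * m /
    (u * (1 - Real.exp (-(lf * Tc) / u)) *
      (Real.exp (-(lf * Tc) / u) + u * (1 - Real.exp (-(lf * Tc) / u)) ^ 2 * (1 - u)))

open Topology

section MarkovPath

variable {α : Type*}

noncomputable def pathProb (π : α → ℝ) (P : α → α → ℝ) {n : ℕ} (z : Fin (n + 1) → α) : ℝ :=
  π (z 0) * ∏ k : Fin n, P (z k.castSucc) (z k.succ)

def pathScore (g : α → α → ℝ) {n : ℕ} (z : Fin (n + 1) → α) : ℝ :=
  ∑ k : Fin n, g (z k.castSucc) (z k.succ)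

theorem sum_pi_fin_succ_eq_sum_snoc [Fintype α] {M : Type*} [AddCommMonoid M] {n : ℕ}
    (F : (Fin (n + 1) → α) → M) :
    ∑ z : Fin (n + 1) → α, F z = ∑ z : Fin n → α, ∑ y : α, F (Fin.snoc z y) := by
  rw [← (Fin.snocEquiv fun _ => α).sum_comp, Fintype.sum_prod_type, Finset.sum_comm]
  rfl

theorem pathProb_snoc (π : α → ℝ) (P : α → α → ℝ) {n : ℕ} (z : Fin (n + 1) → α) (y : α) :
    pathProb π P (Fin.snoc z y) = pathProb π P z * P (z (Fin.last n)) y := by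
  simp only [pathProb, Fin.prod_univ_castSucc, Fin.snoc_castSucc, Fin.succ_castSucc,
    Fin.succ_last, Fin.snoc_last, mul_assoc]
  rw [← Fin.castSucc_zero, Fin.snoc_castSucc]

theorem pathScore_snoc (g : α → α → ℝ) {n : ℕ} (z : Fin (n + 1) → α) (y : α) :
    pathScore g (Fin.snoc z y) = pathScore g z + g (z (Fin.last n)) y := by
  simp only [pathScore, Fin.sum_univ_castSucc, Fin.snoc_castSucc, Fin.succ_castSucc,
    Fin.succ_last, Fin.snoc_last]

variable [Fintype α] {π : α → ℝ} {P : α → α → ℝ}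

theorem sum_pathProb_mul_apply_last (hπ : ∀ y, ∑ x, π x * P x y = π y) (n : ℕ) (f : α → ℝ) :
    ∑ z : Fin (n + 1) → α, pathProb π P z * f (z (Fin.last n)) = ∑ x, π x * f x := by
  induction n generalizing f with
  | zero =>
    rw [← (Equiv.funUnique (Fin 1) α).symm.sum_comp]
    simp [pathProb, Fin.last]
  | succ n ih =>
    rw [sum_pi_fin_succ_eq_sum_snoc]
    simp_rw [pathProb_snoc, Fin.snoc_last, mul_assoc, ← Finset.mul_sum]
    rw [ih fun x => ∑ y, P x y * f y]
    simp_rw [Finset.mul_sum, ← mul_assoc]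
    rw [Finset.sum_comm]
    simp_rw [← Finset.sum_mul, hπ]

theorem sum_pathProb_mul_pathScore_sq {g : α → α → ℝ} (hP : ∀ x, ∑ y, P x y = 1)
    (hg : ∀ x, ∑ y, P x y * g x y = 0) (hπ : ∀ y, ∑ x, π x * P x y = π y) (n : ℕ) :
    ∑ z : Fin (n + 1) → α, pathProb π P z * pathScore g z ^ 2 =
      n * ∑ x, π x * ∑ y, P x y * g x y ^ 2 := by
  induction n with
  | zero => simp [pathScore]
  | succ n ih =>
    have hstep : ∀ z : Fin (n + 1) → α,
        ∑ y, pathProb π P (Fin.snoc z y) * pathScore g (Fin.snoc z y) ^ 2 =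
          pathProb π P z * pathScore g z ^ 2 +
            pathProb π P z * ∑ y, P (z (Fin.last n)) y * g (z (Fin.last n)) y ^ 2 := by
      intro z
      -- the cross term vanishes because the score increments are centred
      have hcross := hg (z (Fin.last n))
      simp_rw [pathProb_snoc, pathScore_snoc]
      calc _ = pathProb π P z * (pathScore g z ^ 2 * ∑ y, P (z (Fin.last n)) y
                + 2 * pathScore g z * ∑ y, P (z (Fin.last n)) y * g (z (Fin.last n)) y
                + ∑ y, P (z (Fin.last n)) y * g (z (Fin.last n)) y ^ 2) := by
            simp only [Finset.mul_sum, ← Finset.sum_add_distrib]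
            exact Finset.sum_congr rfl fun y _ => by ring
        _ = _ := by rw [hP, hcross]; ring
    rw [sum_pi_fin_succ_eq_sum_snoc, Finset.sum_congr rfl fun z _ => hstep z,
      Finset.sum_add_distrib, ih,
      sum_pathProb_mul_apply_last hπ n fun x => ∑ y, P x y * g x y ^ 2]
    push_cast
    ring

theorem hasDerivAt_log_pathProb {P : ℝ → α → α → ℝ} {P' : α → α → ℝ} {l : ℝ} {n : ℕ}
    (z : Fin (n + 1) → α) (hπ : π (z 0) ≠ 0) (hP : ∀ x y, P l x y ≠ 0)
    (hP' : ∀ x y, HasDerivAt (fun l => P l x y) (P' x y) l) :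
    HasDerivAt (fun l => Real.log (pathProb π (P l) z))
      (pathScore (fun x y => P' x y / P l x y) z) l := by
  have hne : ∀ᶠ l' in 𝓝 l, ∀ x y, P l' x y ≠ 0 := by
    simp only [eventually_all]
    exact fun x y => (hP' x y).continuousAt.eventually_ne (hP x y)
  have hlog : (fun l' => Real.log (π (z 0)) +
      ∑ k : Fin n, Real.log (P l' (z k.castSucc) (z k.succ))) =ᶠ[𝓝 l]
      fun l' => Real.log (pathProb π (P l') z) := by
    filter_upwards [hne] with l' hl'
    rw [pathProb, Real.log_mul hπ (Finset.prod_ne_zero_iff.2 fun k _ => hl' _ _),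
      Real.log_prod fun k _ => hl' _ _]
  refine HasDerivAt.congr_of_eventuallyEq ?_ hlog.symm
  exact (HasDerivAt.fun_sum (u := Finset.univ) fun (k : Fin n) _ =>
    (hP' (z k.castSucc) (z k.succ)).log (hP _ _)).const_add (Real.log (π (z 0)))

end MarkovPath

section OnOffChain

variable {u lf t : ℝ}

noncomputable def stationaryLaw (u : ℝ) (x : Bool) : ℝ := if x then u else 1 - u

theorem stationaryLaw_pos (hu : 0 < u) (hu1 : u < 1) (x : Bool) : 0 < stationaryLaw u x := by
  cases x <;> simp [stationaryLaw] <;> linarith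

noncomputable def transProbDeriv (u lf t : ℝ) : Bool → Bool → ℝ
  | false, false => -(t * Real.exp (-(lf * t) / u))
  | false, true  => t * Real.exp (-(lf * t) / u)
  | true,  true  => -((1 - u) / u * t * Real.exp (-(lf * t) / u))
  | true,  false => (1 - u) / u * t * Real.exp (-(lf * t) / u)

theorem seqProb_eq_pathProb {n : ℕ} (z : Fin (n + 1) → Bool) :
    seqProb u lf (fun _ => t) z = pathProb (stationaryLaw u) (transProb u lf t) z :=
  rfl

theorem sum_transProb (x : Bool) : ∑ y, transProb u lf t x y = 1 := by
  cases x <;> simp [transProb]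

theorem sum_mul_transProb (y : Bool) :
    ∑ x, stationaryLaw u x * transProb u lf t x y = stationaryLaw u y := by
  cases y <;> simp [stationaryLaw, transProb] <;> ring

theorem sum_transProbDeriv (x : Bool) : ∑ y, transProbDeriv u lf t x y = 0 := by
  cases x <;> simp [transProbDeriv]

theorem transProb_pos (hu : 0 < u) (hu1 : u < 1) (hlft : 0 < lf * t) (x y : Bool) :
    0 < transProb u lf t x y := by
  have hE : Real.exp (-(lf * t) / u) < 1 :=
    Real.exp_lt_one_iff.2 (div_neg_of_neg_of_pos (neg_neg_of_pos hlft) hu)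
  have hE0 := Real.exp_pos (-(lf * t) / u)
  cases x <;> cases y <;> simp only [transProb] <;> nlinarith

theorem hasDerivAt_transProb (hu : u ≠ 0) (x y : Bool) :
    HasDerivAt (fun lf => transProb u lf t x y) (transProbDeriv u lf t x y) lf := by
  have hE : HasDerivAt (fun lf => Real.exp (-(lf * t) / u))
      (Real.exp (-(lf * t) / u) * (-t / u)) lf :=
    ((((hasDerivAt_id lf).mul_const t).neg).div_const u).exp.congr_deriv (by simp [neg_div])
  cases x <;> cases y <;> simp only [transProb, transProbDeriv]
  · exact ((hE.const_mul u).const_add (1 - u)).congr_deriv (by field_simp)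
  · exact (((hE.const_mul u).const_add (1 - u)).const_sub 1).congr_deriv (by field_simp)
  · exact (((hE.const_mul (1 - u)).const_add u).const_sub 1).congr_deriv (by field_simp)
  · exact ((hE.const_mul (1 - u)).const_add u).congr_deriv (by field_simp)

theorem sum_stationaryLaw_mul_sum_transProb_mul_sq (hu : 0 < u) (hu1 : u < 1)
    (hlft : 0 < lf * t) :
    ∑ x, stationaryLaw u x * ∑ y, transProb u lf t x y *
        (transProbDeriv u lf t x y / transProb u lf t x y) ^ 2 = fisherLf u lf t 1 := by
  have h00 := (transProb_pos hu hu1 hlft false false).ne'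
  have h01 := (transProb_pos hu hu1 hlft false true).ne'
  have h11 := (transProb_pos hu hu1 hlft true true).ne'
  have h10 := (transProb_pos hu hu1 hlft true false).ne'
  simp only [Fintype.sum_bool, stationaryLaw, if_true, Bool.false_eq_true, if_false, transProb,
    transProbDeriv, fisherLf] at h00 h01 h11 h10 ⊢
  set E := Real.exp (-(lf * t) / u)
  have hE1 : E < 1 := Real.exp_lt_one_iff.2 (div_neg_of_neg_of_pos (neg_neg_of_pos hlft) hu)
  have hD : E + u * (1 - u) * (1 - E) ^ 2 ≠ 0 := by
    have : 0 ≤ u * (1 - u) * (1 - E) ^ 2 :=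
      mul_nonneg (mul_nonneg hu.le (by linarith)) (sq_nonneg _)
    linarith [Real.exp_pos (-(lf * t) / u)]
  have h1E : 1 - E ≠ 0 := by linarith
  have hu0 := hu.ne'
  field_simp
  ring

theorem fisherLf_eq_mul (u lf t m : ℝ) : fisherLf u lf t m = m * fisherLf u lf t 1 := by
  unfold fisherLf
  ring

theorem hasDerivAt_log_seqProb (hu : 0 < u) (hu1 : u < 1) (hlft : 0 < lf * t) {n : ℕ}
    (z : Fin (n + 1) → Bool) :
    HasDerivAt (fun lf => Real.log (seqProb u lf (fun _ => t) z))
      (pathScore (fun x y => transProbDeriv u lf t x y / transProb u lf t x y) z) lf := by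
  simp_rw [seqProb_eq_pathProb]
  exact hasDerivAt_log_pathProb z (stationaryLaw_pos hu hu1 _).ne'
    (fun x y => (transProb_pos hu hu1 hlft x y).ne') (hasDerivAt_transProb hu.ne')

theorem fisher_information_lambda_f (hu : 0 < u) (hu1 : u < 1) (hlft : 0 < lf * t) (n : ℕ) :
    ∑ z : Fin (n + 1) → Bool,
        (deriv (fun lf => Real.log (seqProb u lf (fun _ => t) z)) lf) ^ 2
          * seqProb u lf (fun _ => t) z = fisherLf u lf t n := by
  have hcentred : ∀ x, ∑ y, transProb u lf t x y *
      (transProbDeriv u lf t x y / transProb u lf t x y) = 0 := fun x => by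
    simp_rw [mul_div_cancel₀ _ (transProb_pos hu hu1 hlft x _).ne', sum_transProbDeriv]
  simp_rw [(hasDerivAt_log_seqProb hu hu1 hlft _).deriv, seqProb_eq_pathProb,
    mul_comm _ (pathProb _ _ _)]
  rw [sum_pathProb_mul_pathScore_sq sum_transProb hcentred sum_mul_transProb,
    sum_stationaryLaw_mul_sum_transProb_mul_sq hu hu1 hlft, fisherLf_eq_mul _ _ _ n]

end OnOffChain

theorem tendsto_mul_one_sub_exp_neg_div (b : ℝ) :
    Tendsto (fun x : ℝ => x * (1 - Real.exp (-b / x))) atTop (𝓝 b) := by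
  -- the slope of `s ↦ exp (-b s)` at `0`, taken along `s = x⁻¹ → 0⁺`
  have hslope := (((hasDerivAt_id (0 : ℝ)).const_mul (-b)).exp.tendsto_slope_zero_right).comp
    tendsto_inv_atTop_nhdsGT_zero
  convert hslope.neg using 2 with x
  · simp [div_eq_mul_inv]
    ring
  · simp

theorem tendsto_fisherLf_window {u lf T : ℝ} (hu : u ≠ 0) (hlfT : lf * T ≠ 0) :
    Tendsto (fun x : ℝ => fisherLf u lf (T / x) x) atTop (𝓝 (2 * T * (1 - u) / lf)) := by
  set b := lf * T / u
  set Γ : ℝ → ℝ := fun x => Real.exp (-b / x)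
  have hΓ : Tendsto Γ atTop (𝓝 1) := by
    simpa [Γ, Function.comp_def] using
      (Real.continuous_exp.tendsto 0).comp (tendsto_const_nhds.div_atTop tendsto_id)
  have hb : u * b * (1 + u * (1 - 1) ^ 2 * (1 - u)) ≠ 0 := by
    simp [b, hu, hlfT]
  have hlim := ((((hΓ.pow 2).mul_const (T ^ 2 * (1 - u))).mul
      ((tendsto_const_nhds (x := (1 : ℝ))).add hΓ)).div
    ((tendsto_const_nhds.mul (tendsto_mul_one_sub_exp_neg_div b)).mul
      (hΓ.add ((((tendsto_const_nhds.sub hΓ).pow 2).const_mul u).mul_const (1 - u)))) hb)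
  have hlf := left_ne_zero_of_mul hlfT
  have hT := right_ne_zero_of_mul hlfT
  convert hlim.congr' ?_ using 2
  · simp only [b]
    field_simp
    ring
  · filter_upwards [eventually_ne_atTop 0] with x hx
    have hexp : -(lf * (T / x)) / u = -b / x := by ring
    simp only [fisherLf, hexp, Γ, Pi.div_apply]
    field_simp

theorem fisher_information_lambda_n_general (u ln : ℝ)
    (hu : 0 < u) (hu1 : u < 1) (hln : 0 < ln)
    (n : ℕ) (Tc : ℝ) (hTc : 0 < Tc) (T : ℝ) (hT : 0 < T) :
    (∑ z : Fin (n + 1) → Bool,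
        (deriv (fun l => Real.log (seqProb u (u * l / (1 - u)) (fun _ => Tc) z)) ln) ^ 2
          * seqProb u (u * ln / (1 - u)) (fun _ => Tc) z
      = u ^ 2 / (1 - u) ^ 2 * fisherLf u (u * ln / (1 - u)) Tc (n : ℝ))
    ∧ Filter.Tendsto
        (fun N : ℕ =>
          (u ^ 2 / (1 - u) ^ 2 *
            fisherLf u (u * ln / (1 - u)) (T / ((N : ℝ) - 1)) ((N : ℝ) - 1))⁻¹)
        Filter.atTop
        (nhds (ln / (2 * T * u))) := by
  have h1u : 0 < 1 - u := sub_pos.2 hu1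
  refine ⟨?_, ?_⟩
  · have hlft : 0 < u * ln / (1 - u) * Tc := by positivity
    have hlf : HasDerivAt (fun l => u * l / (1 - u)) (u / (1 - u)) ln := by
      simpa using ((hasDerivAt_id ln).const_mul u).div_const (1 - u)
    have hscore (z : Fin (n + 1) → Bool) :
        deriv (fun l => Real.log (seqProb u (u * l / (1 - u)) (fun _ => Tc) z)) ln =
          u / (1 - u) *
            deriv (fun lf => Real.log (seqProb u lf (fun _ => Tc) z)) (u * ln / (1 - u)) := by
      have h := hasDerivAt_log_seqProb hu hu1 hlft z
      rw [h.deriv, mul_comm]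
      exact (h.comp ln hlf).deriv
    simp_rw [hscore, mul_pow, mul_assoc, ← Finset.mul_sum,
      fisher_information_lambda_f hu hu1 hlft, div_pow]
  · have hN : Tendsto (fun N : ℕ => (N : ℝ) - 1) atTop atTop :=
      tendsto_atTop_add_const_right _ _ tendsto_natCast_atTop_atTop
    have hlft : u * ln / (1 - u) * T ≠ 0 := by positivity
    have hlim := ((tendsto_fisherLf_window hu.ne' hlft).comp hN).const_mul
      (u ^ 2 / (1 - u) ^ 2)
    have hval : (u ^ 2 / (1 - u) ^ 2 * (2 * T * (1 - u) / (u * ln / (1 - u))))⁻¹ =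
        ln / (2 * T * u) := by
      field_simp
    rw [← hval]
    exact hlim.inv₀ (by positivity)

/-- parameterizing the PU process by the arrival rate `λ_n` via
`λ_f = uλ_n/(1-u)` (with `u` fixed), the Fisher information of the uniformly
sampled traffic vector (`N = n + 1` samples, inter-sample time `T_c`) with
respect to `λ_n` satisfies `I_m(λ_n,N) = (u²/(1-u)²) I_m(λ_f,N)`; consequently,
over a fixed observation window `T` (inter-sample time `T/(N-1)`),
`I_m(λ_n,N)⁻¹ → λ_n/(2Tu)` as `N → ∞`. -/
theorem fisher_information_lambda_n (u ln : ℝ)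
    (hu : 0 < u) (hu1 : u < 1) (hln : 0 < ln)
    (n : ℕ) (hn : 1 ≤ n) (Tc : ℝ) (hTc : 0 < Tc) (T : ℝ) (hT : 0 < T) :
    (∑ z : Fin (n + 1) → Bool,
        (deriv (fun l => Real.log (seqProb u (u * l / (1 - u)) (fun _ => Tc) z)) ln) ^ 2
          * seqProb u (u * ln / (1 - u)) (fun _ => Tc) z
      = u ^ 2 / (1 - u) ^ 2 * fisherLf u (u * ln / (1 - u)) Tc (n : ℝ))
    ∧ Filter.Tendsto
        (fun N : ℕ =>
          (u ^ 2 / (1 - u) ^ 2 *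
            fisherLf u (u * ln / (1 - u)) (T / ((N : ℝ) - 1)) ((N : ℝ) - 1))⁻¹)
        Filter.atTop
        (nhds (ln / (2 * T * u))) :=
  fisher_information_lambda_n_general u ln hu hu1 hln n Tc hTc T hT
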